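/- (Li–Yau differential Harnack inequality, key step) If v = log u where u > 0 solves ∂ₜu = Δu on ℝⁿ, then v satisfies ∂ₜv = Δv + ‖∇v‖², and consequently ∂ₜ(Δv) ≥ Δ(Δv) + (2/n)(Δv)² + 2⟨∇v, ∇Δv⟩. -/

import Mathlib

open scoped RealInnerProductSpace

/-- The Euclidean Laplacian, as the sum of second derivatives in coordinate directions. -/
noncomputable def lap {n : ℕ} (f : EuclideanSpace ℝ (Fin n) → ℝ)
    (x : EuclideanSpace ℝ (Fin n)) : ℝ :=
  ∑ i, fderiv ℝ (fun y => fderiv ℝ f y (EuclideanSpace.single i 1)) x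
    (EuclideanSpace.single i 1)

namespace LiYauAux
open Set

noncomputable def DD {E : Type*} [NormedAddCommGroup E] [NormedSpace ℝ E]
    (w : E) (F : E → ℝ) : E → ℝ := fun p => fderiv ℝ F p w
variable {E : Type*} [NormedAddCommGroup E] [NormedSpace ℝ E] {Ω : Set E} {p : E}

theorem top_add_one_le : ((⊤:ℕ∞) : WithTop ℕ∞) + 1 ≤ ((⊤:ℕ∞) : WithTop ℕ∞) := by
  norm_cast

theorem diffAt (hΩ : IsOpen Ω) {F : E → ℝ} (hF : ContDiffOn ℝ (⊤:ℕ∞) F Ω) (hp : p ∈ Ω) :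
    DifferentiableAt ℝ F p :=
  (hF.contDiffAt (hΩ.mem_nhds hp)).differentiableAt (by norm_cast)

theorem contDiffOn_DD (hΩ : IsOpen Ω) {F : E → ℝ} (hF : ContDiffOn ℝ (⊤:ℕ∞) F Ω) (w : E) :
    ContDiffOn ℝ (⊤:ℕ∞) (DD w F) Ω :=
  (hF.fderiv_of_isOpen hΩ top_add_one_le).clm_apply contDiffOn_const

theorem DD_congr (hΩ : IsOpen Ω) {F G : E → ℝ} (h : ∀ q ∈ Ω, F q = G q) (hp : p ∈ Ω) (w : E) :
    DD w F p = DD w G p := by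
  have hFG : F =ᶠ[nhds p] G := Filter.eventuallyEq_of_mem (hΩ.mem_nhds hp) h
  simp only [DD, hFG.fderiv_eq]

theorem DD_add {F G : E → ℝ} (hF : DifferentiableAt ℝ F p) (hG : DifferentiableAt ℝ G p) (w : E) :
    DD w (fun q => F q + G q) p = DD w F p + DD w G p := by
  simp [DD, fderiv_fun_add hF hG]

theorem DD_sum {ι : Type*} {s : Finset ι} {F : ι → E → ℝ}
    (h : ∀ i ∈ s, DifferentiableAt ℝ (F i) p) (w : E) :
    DD w (fun q => ∑ i ∈ s, F i q) p = ∑ i ∈ s, DD w (F i) p := by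
  simp [DD, fderiv_fun_sum h]

theorem DD_mul {F G : E → ℝ} (hF : DifferentiableAt ℝ F p) (hG : DifferentiableAt ℝ G p) (w : E) :
    DD w (fun q => F q * G q) p = F p * DD w G p + G p * DD w F p := by
  simp [DD, fderiv_fun_mul hF hG]

theorem DD_const_mul {F : E → ℝ} (hF : DifferentiableAt ℝ F p) (c : ℝ) (w : E) :
    DD w (fun q => c * F q) p = c * DD w F p := by
  simp [DD, fderiv_const_mul hF]

theorem DD_comm (hΩ : IsOpen Ω) {F : E → ℝ} (hF : ContDiffOn ℝ (⊤:ℕ∞) F Ω) (hp : p ∈ Ω)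
    (v w : E) : DD v (DD w F) p = DD w (DD v F) p := by
  have hf' : ContDiffOn ℝ (⊤:ℕ∞) (fderiv ℝ F) Ω := hF.fderiv_of_isOpen hΩ top_add_one_le
  have hf'' : HasFDerivAt (fderiv ℝ F) (fderiv ℝ (fderiv ℝ F) p) p :=
    ((hf'.contDiffAt (hΩ.mem_nhds hp)).differentiableAt
      (by norm_cast)).hasFDerivAt
  have hev : ∀ᶠ y in nhds p, HasFDerivAt F (fderiv ℝ F y) y := by
    filter_upwards [hΩ.mem_nhds hp] with y hy
    exact (diffAt hΩ hF hy).hasFDerivAt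
  have hsym := second_derivative_symmetric_of_eventually hev hf''
  have key : ∀ a b : E, DD a (DD b F) p = fderiv ℝ (fderiv ℝ F) p a b := by
    intro a b
    have h1 : HasFDerivAt (fun y => fderiv ℝ F y b)
        (((fderiv ℝ F p).comp (0 : E →L[ℝ] E)) + (fderiv ℝ (fderiv ℝ F) p).flip b) p :=
      hf''.clm_apply (hasFDerivAt_const b p)
    have h2 : fderiv ℝ (fun y => fderiv ℝ F y b) p a
        = (((fderiv ℝ F p).comp (0 : E →L[ℝ] E)) + (fderiv ℝ (fderiv ℝ F) p).flip b) a := by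
      rw [h1.fderiv]
    have h3 : DD a (DD b F) p = fderiv ℝ (fun y => fderiv ℝ F y b) p a := rfl
    rw [h3, h2]; simp
  rw [key, key, hsym]


variable {n : ℕ} {T : ℝ}

def Om (n : ℕ) (T : ℝ) : Set (EuclideanSpace ℝ (Fin n) × ℝ) := Set.univ ×ˢ Set.Ioo 0 T

theorem isOpen_Om : IsOpen (Om n T) := isOpen_univ.prod isOpen_Ioo

noncomputable def ee (n : ℕ) (i : Fin n) : EuclideanSpace ℝ (Fin n) × ℝ := (EuclideanSpace.single i 1, 0)
def tau (n : ℕ) : EuclideanSpace ℝ (Fin n) × ℝ := (0, 1)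

theorem slice_fderiv {F : EuclideanSpace ℝ (Fin n) × ℝ → ℝ}
    (hF : ContDiffOn ℝ (⊤:ℕ∞) F (Om n T)) {x : EuclideanSpace ℝ (Fin n)} {t : ℝ}
    (ht : t ∈ Ioo (0:ℝ) T) (w : EuclideanSpace ℝ (Fin n)) :
    fderiv ℝ (fun y => F (y, t)) x w = DD (w, 0) F (x, t) := by
  have hd : DifferentiableAt ℝ F (x, t) := diffAt isOpen_Om hF ⟨mem_univ x, ht⟩
  have h : HasFDerivAt (fun y => F (y, t))
      ((fderiv ℝ F (x, t)).comp (ContinuousLinearMap.inl ℝ _ ℝ)) x :=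
    hd.hasFDerivAt.comp x (hasFDerivAt_prodMk_left x t)
  rw [h.fderiv]; rfl

theorem time_deriv {F : EuclideanSpace ℝ (Fin n) × ℝ → ℝ}
    (hF : ContDiffOn ℝ (⊤:ℕ∞) F (Om n T)) {x : EuclideanSpace ℝ (Fin n)} {t : ℝ}
    (ht : t ∈ Ioo (0:ℝ) T) :
    deriv (fun s => F (x, s)) t = DD (tau n) F (x, t) := by
  have hd : DifferentiableAt ℝ F (x, t) := diffAt isOpen_Om hF ⟨mem_univ x, ht⟩
  have hcurve : HasDerivAt (fun s : ℝ => (x, s)) (tau n) t :=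
    (hasDerivAt_const t x).prodMk (hasDerivAt_id t)
  have h : HasDerivAt (fun s => F (x, s)) (fderiv ℝ F (x, t) (tau n)) t :=
    hd.hasFDerivAt.comp_hasDerivAt t hcurve
  rw [h.deriv]; rfl

theorem slice_lap {F : EuclideanSpace ℝ (Fin n) × ℝ → ℝ}
    (hF : ContDiffOn ℝ (⊤:ℕ∞) F (Om n T)) {x : EuclideanSpace ℝ (Fin n)} {t : ℝ}
    (ht : t ∈ Ioo (0:ℝ) T) :
    lap (fun y => F (y, t)) x = ∑ i, DD (ee n i) (DD (ee n i) F) (x, t) := by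
  unfold lap
  refine Finset.sum_congr rfl fun i _ => ?_
  have hinner : (fun y => fderiv ℝ (fun z => F (z, t)) y (EuclideanSpace.single i 1))
      = fun y => DD (ee n i) F (y, t) :=
    funext fun y => slice_fderiv hF ht _
  rw [hinner, slice_fderiv (contDiffOn_DD isOpen_Om hF _) ht]
  rfl

theorem grad_apply (f : EuclideanSpace ℝ (Fin n) → ℝ) (x : EuclideanSpace ℝ (Fin n)) (i : Fin n) :
    gradient f x i = fderiv ℝ f x (EuclideanSpace.single i 1) := by
  have h : (inner ℝ (gradient f x) (EuclideanSpace.single i (1:ℝ)) : ℝ)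
      = fderiv ℝ f x (EuclideanSpace.single i 1) := InnerProductSpace.toDual_symm_apply
  rw [← h, EuclideanSpace.inner_single_right]; simp

theorem grad_inner (f g : EuclideanSpace ℝ (Fin n) → ℝ) (x : EuclideanSpace ℝ (Fin n)) :
    (inner ℝ (gradient f x) (gradient g x) : ℝ)
      = ∑ i, fderiv ℝ f x (EuclideanSpace.single i 1) * fderiv ℝ g x (EuclideanSpace.single i 1)
    := by
  rw [PiLp.inner_apply]
  exact Finset.sum_congr rfl fun i _ => by
    rw [← grad_apply f x i, ← grad_apply g x i]; simp [RCLike.inner_apply, mul_comm]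

theorem grad_norm_sq (f : EuclideanSpace ℝ (Fin n) → ℝ) (x : EuclideanSpace ℝ (Fin n)) :
    ‖gradient f x‖ ^ 2 = ∑ i, (fderiv ℝ f x (EuclideanSpace.single i 1)) ^ 2 := by
  rw [← real_inner_self_eq_norm_sq, grad_inner]
  exact Finset.sum_congr rfl fun i _ => (sq _).symm


theorem core {n : ℕ} (hn : 0 < n) {T : ℝ} {U : EuclideanSpace ℝ (Fin n) × ℝ → ℝ}
    (hU : ContDiffOn ℝ (⊤:ℕ∞) U (Om n T))
    (hpos : ∀ p ∈ Om n T, 0 < U p)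
    (hheat : ∀ p ∈ Om n T, DD (tau n) U p = ∑ i, DD (ee n i) (DD (ee n i) U) p) :
    ∀ p ∈ Om n T,
      (DD (tau n) (fun r => Real.log (U r)) p
        = (∑ i, DD (ee n i) (DD (ee n i) (fun r => Real.log (U r))) p)
          + ∑ i, (DD (ee n i) (fun r => Real.log (U r)) p) ^ 2) ∧
      (DD (tau n) (fun q => ∑ i, DD (ee n i) (DD (ee n i) (fun r => Real.log (U r))) q) p
        ≥ (∑ i, DD (ee n i) (DD (ee n i)
              (fun q => ∑ j, DD (ee n j) (DD (ee n j) (fun r => Real.log (U r))) q)) p)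
          + 2 / n * (∑ i, DD (ee n i) (DD (ee n i) (fun r => Real.log (U r))) p) ^ 2
          + 2 * ∑ i, DD (ee n i) (fun r => Real.log (U r)) p
              * DD (ee n i) (fun q => ∑ j, DD (ee n j) (DD (ee n j) (fun r => Real.log (U r))) q) p)
    := by
  have hO : IsOpen (Om n T) := isOpen_Om
  set W : EuclideanSpace ℝ (Fin n) × ℝ → ℝ := fun r => Real.log (U r) with hWdef
  set Lf : EuclideanSpace ℝ (Fin n) × ℝ → ℝ :=
    fun q => ∑ i, DD (ee n i) (DD (ee n i) W) q with hLfdef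
  set Qf : EuclideanSpace ℝ (Fin n) × ℝ → ℝ :=
    fun q => ∑ i, (DD (ee n i) W q) ^ 2 with hQfdef
  have hW : ContDiffOn ℝ (⊤:ℕ∞) W (Om n T) := hU.log fun q hq => (hpos q hq).ne'
  have hW1 : ∀ i, ContDiffOn ℝ (⊤:ℕ∞) (DD (ee n i) W) (Om n T) :=
    fun i => contDiffOn_DD hO hW _
  have hW2 : ∀ i j, ContDiffOn ℝ (⊤:ℕ∞) (DD (ee n i) (DD (ee n j) W)) (Om n T) :=
    fun i j => contDiffOn_DD hO (hW1 j) _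
  have hLf : ContDiffOn ℝ (⊤:ℕ∞) Lf (Om n T) := ContDiffOn.sum fun i _ => hW2 i i
  have hQf : ContDiffOn ℝ (⊤:ℕ∞) Qf (Om n T) := ContDiffOn.sum fun i _ => (hW1 i).pow 2
  -- chain rule for log
  have hlog : ∀ q ∈ Om n T, ∀ w, DD w U q = U q * DD w W q := by
    intro q hq w
    have hne : U q ≠ 0 := (hpos q hq).ne'
    have h := (diffAt hO hU hq).hasFDerivAt.log hne
    have h2 : DD w W q = (U q)⁻¹ * DD w U q := by
      have : fderiv ℝ W q = (U q)⁻¹ • fderiv ℝ U q := h.fderiv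
      simp only [DD, this]; simp
    rw [h2]; field_simp
  -- the heat equation for W = log U
  have hWeq : ∀ q ∈ Om n T, DD (tau n) W q = Lf q + Qf q := by
    intro q hq
    have hne : U q ≠ 0 := (hpos q hq).ne'
    have key : ∀ i, DD (ee n i) (DD (ee n i) U) q
        = U q * (DD (ee n i) (DD (ee n i) W) q + (DD (ee n i) W q) ^ 2) := by
      intro i
      have h1 : DD (ee n i) (DD (ee n i) U) q
          = DD (ee n i) (fun r => U r * DD (ee n i) W r) q :=
        DD_congr hO (fun r hr => hlog r hr _) hq _
      rw [h1, DD_mul (diffAt hO hU hq) (diffAt hO (hW1 i) hq), hlog q hq]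
      ring
    have h2 : U q * DD (tau n) W q = U q * (Lf q + Qf q) := by
      rw [← hlog q hq, hheat q hq]
      simp only [key, hLfdef, hQfdef]
      rw [← Finset.sum_add_distrib, Finset.mul_sum]
    exact mul_left_cancel₀ hne h2
  intro p hp
  constructor
  · have := hWeq p hp
    simpa only [hLfdef, hQfdef] using this
  -- gradient of Lf in direction ee j
  have hgradLf : ∀ q ∈ Om n T, ∀ j, DD (ee n j) Lf q
      = ∑ i, DD (ee n i) (DD (ee n i) (DD (ee n j) W)) q := by
    intro q hq j
    rw [hLfdef]
    rw [DD_sum (fun i _ => diffAt hO (hW2 i i) hq)]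
    refine Finset.sum_congr rfl fun i _ => ?_
    rw [DD_comm hO (hW1 i) hq]
    exact DD_congr hO (fun r hr => DD_comm hO hW hr _ _) hq _
  -- commute time derivative inside
  have hstep1 : DD (tau n) Lf p = ∑ i, DD (ee n i) (DD (ee n i) (DD (tau n) W)) p := by
    rw [hLfdef, DD_sum (fun i _ => diffAt hO (hW2 i i) hp)]
    refine Finset.sum_congr rfl fun i _ => ?_
    rw [DD_comm hO (hW1 i) hp]
    exact DD_congr hO (fun r hr => DD_comm hO hW hr _ _) hp _
  -- substitute the equation for ∂ₜ W
  have hstep2 : ∀ i, DD (ee n i) (DD (ee n i) (DD (tau n) W)) p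
      = DD (ee n i) (DD (ee n i) Lf) p + DD (ee n i) (DD (ee n i) Qf) p := by
    intro i
    have e1 : ∀ r ∈ Om n T, DD (ee n i) (DD (tau n) W) r
        = DD (ee n i) Lf r + DD (ee n i) Qf r := by
      intro r hr
      rw [DD_congr hO hWeq hr]
      exact DD_add (diffAt hO hLf hr) (diffAt hO hQf hr) _
    rw [DD_congr hO e1 hp]
    exact DD_add (diffAt hO (contDiffOn_DD hO hLf _) hp)
      (diffAt hO (contDiffOn_DD hO hQf _) hp) _
  -- first derivative of Qf
  have hQf1 : ∀ r ∈ Om n T, ∀ i, DD (ee n i) Qf r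
      = ∑ j, 2 * (DD (ee n j) W r * DD (ee n i) (DD (ee n j) W) r) := by
    intro r hr i
    rw [hQfdef, DD_sum (F := fun j q => (DD (ee n j) W q) ^ 2) (fun j _ => (diffAt hO (hW1 j) hr).pow 2)]
    refine Finset.sum_congr rfl fun j _ => ?_
    have hsq : (fun q => (DD (ee n j) W q) ^ 2)
        = fun q => DD (ee n j) W q * DD (ee n j) W q := by funext q; ring
    rw [hsq, DD_mul (diffAt hO (hW1 j) hr) (diffAt hO (hW1 j) hr)]
    ring
  -- second derivative of Qf
  have hQf2 : ∀ i, DD (ee n i) (DD (ee n i) Qf) p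
      = ∑ j, (2 * (DD (ee n i) (DD (ee n j) W) p) ^ 2
          + 2 * (DD (ee n j) W p * DD (ee n i) (DD (ee n i) (DD (ee n j) W)) p)) := by
    intro i
    rw [DD_congr hO (fun r hr => hQf1 r hr i) hp]
    rw [DD_sum (F := fun j r => 2 * (DD (ee n j) W r * DD (ee n i) (DD (ee n j) W) r)) (fun j _ => ((diffAt hO (hW1 j) hp).mul (diffAt hO (hW2 i j) hp)).const_mul 2)]
    refine Finset.sum_congr rfl fun j _ => ?_
    rw [DD_const_mul (F := fun r => DD (ee n j) W r * DD (ee n i) (DD (ee n j) W) r) ((diffAt hO (hW1 j) hp).mul (diffAt hO (hW2 i j) hp))]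
    rw [DD_mul (diffAt hO (hW1 j) hp) (diffAt hO (hW2 i j) hp)]
    ring
  -- assemble the Bochner-type identity
  have h3 : ∀ j, DD (ee n j) Lf p
      = ∑ i, DD (ee n i) (DD (ee n i) (DD (ee n j) W)) p := hgradLf p hp
  have swap : ∑ i : Fin n, ∑ j : Fin n,
        2 * (DD (ee n j) W p * DD (ee n i) (DD (ee n i) (DD (ee n j) W)) p)
      = ∑ j : Fin n, ∑ i : Fin n,
        2 * (DD (ee n j) W p * DD (ee n i) (DD (ee n i) (DD (ee n j) W)) p) :=
    Finset.sum_comm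
  have hmain : DD (tau n) Lf p
      = (∑ i, DD (ee n i) (DD (ee n i) Lf) p)
        + 2 * (∑ i, ∑ j, (DD (ee n i) (DD (ee n j) W) p) ^ 2)
        + 2 * ∑ j, DD (ee n j) W p * DD (ee n j) Lf p := by
    rw [hstep1]
    simp only [hstep2, hQf2, h3, Finset.sum_add_distrib, Finset.mul_sum]
    linarith [swap]
  -- Cauchy-Schwarz part
  have hCS : 2 / (n:ℝ) * (∑ i, DD (ee n i) (DD (ee n i) W) p) ^ 2
      ≤ 2 * ∑ i, ∑ j, (DD (ee n i) (DD (ee n j) W) p) ^ 2 := by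
    have h1 : (∑ i, DD (ee n i) (DD (ee n i) W) p) ^ 2
        ≤ (n:ℝ) * ∑ i, (DD (ee n i) (DD (ee n i) W) p) ^ 2 := by
      simpa using sq_sum_le_card_mul_sum_sq (s := Finset.univ)
        (f := fun i => DD (ee n i) (DD (ee n i) W) p)
    have h2 : ∑ i, (DD (ee n i) (DD (ee n i) W) p) ^ 2
        ≤ ∑ i, ∑ j, (DD (ee n i) (DD (ee n j) W) p) ^ 2 :=
      Finset.sum_le_sum fun i _ =>
        Finset.single_le_sum (f := fun j => (DD (ee n i) (DD (ee n j) W) p) ^ 2)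
          (fun j _ => sq_nonneg _) (Finset.mem_univ i)
    have hn' : (0:ℝ) < n := by exact_mod_cast hn
    calc 2 / (n:ℝ) * (∑ i, DD (ee n i) (DD (ee n i) W) p) ^ 2
        ≤ 2 / (n:ℝ) * ((n:ℝ) * ∑ i, (DD (ee n i) (DD (ee n i) W) p) ^ 2) :=
          mul_le_mul_of_nonneg_left h1 (by positivity)
      _ = 2 * ∑ i, (DD (ee n i) (DD (ee n i) W) p) ^ 2 := by field_simp
      _ ≤ 2 * ∑ i, ∑ j, (DD (ee n i) (DD (ee n j) W) p) ^ 2 := by linarith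
  rw [ge_iff_le]
  have hmain' := hmain
  simp only [hLfdef] at hmain' hCS ⊢
  linarith [hmain', hCS]

end LiYauAux

open LiYauAux Set in
/-- Key step of the Li–Yau differential Harnack inequality: if `v = log u` for a smooth
positive solution `u` of the heat equation on `ℝⁿ`, then `∂ₜv = Δv + ‖∇v‖²`, and
`∂ₜ(Δv) ≥ Δ(Δv) + (2/n)(Δv)² + 2⟨∇v, ∇Δv⟩`. -/
theorem stmt_7 {n : ℕ} (hn : 0 < n) (T : ℝ) (hT : 0 < T)
    (u : EuclideanSpace ℝ (Fin n) → ℝ → ℝ)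
    (hu : ContDiffOn ℝ (⊤ : ℕ∞) (fun p : EuclideanSpace ℝ (Fin n) × ℝ => u p.1 p.2)
      (Set.univ ×ˢ Set.Ioo 0 T))
    (hpos : ∀ x, ∀ t ∈ Set.Ioo (0:ℝ) T, 0 < u x t)
    (heq : ∀ x, ∀ t ∈ Set.Ioo (0:ℝ) T,
      HasDerivAt (fun s => u x s) (lap (fun y => u y t) x) t) :
    ∀ x, ∀ t ∈ Set.Ioo (0:ℝ) T,
      deriv (fun s => Real.log (u x s)) t
          = lap (fun y => Real.log (u y t)) x
            + ‖gradient (fun y => Real.log (u y t)) x‖ ^ 2 ∧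
      deriv (fun s => lap (fun y => Real.log (u y s)) x) t
          ≥ lap (fun y => lap (fun z => Real.log (u z t)) y) x
            + (2 / n) * (lap (fun y => Real.log (u y t)) x) ^ 2
            + 2 * ⟪gradient (fun y => Real.log (u y t)) x,
                gradient (fun y => lap (fun z => Real.log (u z t)) y) x⟫ := by
  intro x t ht
  have hO : IsOpen (Om n T) := isOpen_Om
  have hU : ContDiffOn ℝ (⊤:ℕ∞) (fun p : EuclideanSpace ℝ (Fin n) × ℝ => u p.1 p.2) (Om n T) :=
    hu.of_le (by simp)
  have hpos' : ∀ p ∈ Om n T, 0 < (fun p : EuclideanSpace ℝ (Fin n) × ℝ => u p.1 p.2) p :=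
    fun p hp => hpos p.1 p.2 hp.2
  have hp : (x, t) ∈ Om n T := ⟨mem_univ x, ht⟩
  have hW : ContDiffOn ℝ (⊤:ℕ∞)
      (fun r : EuclideanSpace ℝ (Fin n) × ℝ => Real.log (u r.1 r.2)) (Om n T) :=
    hU.log fun q hq => (hpos' q hq).ne'
  -- heat equation in directional-derivative form
  have hheat : ∀ p ∈ Om n T,
      DD (tau n) (fun p : EuclideanSpace ℝ (Fin n) × ℝ => u p.1 p.2) p
        = ∑ i, DD (ee n i) (DD (ee n i)
            (fun p : EuclideanSpace ℝ (Fin n) × ℝ => u p.1 p.2)) p := by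
    intro p hpΩ
    have h1 : deriv (fun s => u p.1 s) p.2
        = DD (tau n) (fun p : EuclideanSpace ℝ (Fin n) × ℝ => u p.1 p.2) (p.1, p.2) :=
      time_deriv hU hpΩ.2
    have h2 := (heq p.1 p.2 hpΩ.2).deriv
    have h3 : lap (fun y => u y p.2) p.1
        = ∑ i, DD (ee n i) (DD (ee n i)
            (fun p : EuclideanSpace ℝ (Fin n) × ℝ => u p.1 p.2)) (p.1, p.2) :=
      slice_lap hU hpΩ.2
    have h4 : (p.1, p.2) = p := Prod.mk.eta
    rw [← h4, ← h1, h2, h3]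
  have hcore := core hn hU hpos' hheat (x, t) hp
  -- identify `log ∘ u` with the `W` of `core`
  set W : EuclideanSpace ℝ (Fin n) × ℝ → ℝ :=
    fun r : EuclideanSpace ℝ (Fin n) × ℝ =>
      Real.log ((fun p : EuclideanSpace ℝ (Fin n) × ℝ => u p.1 p.2) r) with hWdef
  have hWc : ContDiffOn ℝ (⊤:ℕ∞) W (Om n T) := hW
  have hLsm : ContDiffOn ℝ (⊤:ℕ∞)
      (fun q => ∑ i, DD (ee n i) (DD (ee n i) W) q) (Om n T) :=
    ContDiffOn.sum fun i _ => contDiffOn_DD hO (contDiffOn_DD hO hWc _) _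
  -- translations of each term in the statement
  have hderiv : deriv (fun s => Real.log (u x s)) t = DD (tau n) W (x, t) :=
    time_deriv hWc ht
  have hlapW : lap (fun y => Real.log (u y t)) x
      = ∑ i, DD (ee n i) (DD (ee n i) W) (x, t) := slice_lap hWc ht
  have hgradW : ‖gradient (fun y => Real.log (u y t)) x‖ ^ 2
      = ∑ i, (DD (ee n i) W (x, t)) ^ 2 := by
    rw [grad_norm_sq]
    refine Finset.sum_congr rfl fun i _ => ?_
    have e : fderiv ℝ (fun y => Real.log (u y t)) x (EuclideanSpace.single i 1)
        = DD (ee n i) W (x, t) := slice_fderiv hWc ht _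
    rw [e]
  have hfun : (fun y => lap (fun z => Real.log (u z t)) y)
      = fun y => (fun q => ∑ i, DD (ee n i) (DD (ee n i) W) q) (y, t) :=
    funext fun y => slice_lap hWc ht
  have hlaplap : lap (fun y => lap (fun z => Real.log (u z t)) y) x
      = ∑ i, DD (ee n i) (DD (ee n i)
          (fun q => ∑ j, DD (ee n j) (DD (ee n j) W) q)) (x, t) := by
    rw [hfun]
    exact slice_lap hLsm ht
  have hinner : (⟪gradient (fun y => Real.log (u y t)) x,
        gradient (fun y => lap (fun z => Real.log (u z t)) y) x⟫ : ℝ)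
      = ∑ i, DD (ee n i) W (x, t)
          * DD (ee n i) (fun q => ∑ j, DD (ee n j) (DD (ee n j) W) q) (x, t) := by
    rw [hfun, grad_inner]
    refine Finset.sum_congr rfl fun i _ => ?_
    have e1 : fderiv ℝ (fun y => Real.log (u y t)) x (EuclideanSpace.single i 1)
        = DD (ee n i) W (x, t) := slice_fderiv hWc ht _
    have e2 : fderiv ℝ (fun y => (fun q => ∑ j, DD (ee n j) (DD (ee n j) W) q) (y, t)) x
          (EuclideanSpace.single i 1)
        = DD (ee n i) (fun q => ∑ j, DD (ee n j) (DD (ee n j) W) q) (x, t) :=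
      slice_fderiv hLsm ht _
    rw [e1, e2]
  have hderivL : deriv (fun s => lap (fun y => Real.log (u y s)) x) t
      = DD (tau n) (fun q => ∑ i, DD (ee n i) (DD (ee n i) W) q) (x, t) := by
    have hev : (fun s => lap (fun y => Real.log (u y s)) x)
        =ᶠ[nhds t] (fun s => (fun q => ∑ i, DD (ee n i) (DD (ee n i) W) q) (x, s)) := by
      filter_upwards [Ioo_mem_nhds ht.1 ht.2] with s hs
      exact slice_lap hWc hs
    rw [hev.deriv_eq]
    exact time_deriv hLsm ht
  constructor
  · rw [hderiv, hlapW, hgradW]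
    exact hcore.1
  · rw [hderivL, hlaplap, hlapW, hinner]
    exact hcore.2
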